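/- arXiv:2506.20613 — 2 statements merged into one kernel-verified Lean document; each statement's English description precedes it below -/
import Mathlib

section
/- There exist constants C > 0 and c > 0 such that for all integers k ≥ 1 and all integers ν with 1 ≤ ν ≤ √k, ∫_{[0,1]^{2k-1}} (∑_{a=1}^{2k-1} x_a(1-x_a))^{-ν/2} dx ≤ C (c/k)^{ν/2}. -/
open Real MeasureTheory Set

/-!
By AM–GM, `∑ₐ yₐ ≥ n (∏ₐ yₐ)^(1/n)` for the `n = 2k - 1` numbers `yₐ = xₐ(1 - xₐ)`, so
`σ^(-2p) ≤ n^(-p) ∏ₐ yₐ^(-p/n)` and the integral over the cube factorises into the `n`-th power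
of `∫₀¹ (t(1 - t))^(-s)` with `s = p/n`. Since `ν ≤ √k ≤ k`, the exponent `s` is at most `1/2`,
where this one-dimensional integral is at most `2^s (1 + s)/(1 - s) ≤ (2e⁴)^s`. Hence the
integral is at most `n^(-p) (2e⁴)^p = (2e⁴/n)^p ≤ (2e⁴/k)^p`.
-/

lemma rpow_neg_mul_rpow_neg_le_of_half_le {s a b : ℝ} (hs : 0 ≤ s) (ha : 0 ≤ a)
    (hb : 1 / 2 ≤ b) (hb1 : b ≤ 1) :
    a ^ (-s) * b ^ (-s) ≤ 2 ^ s * (a ^ (-s) + b ^ (-s) - 1) := by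
  have hb_le : b ^ (-s) ≤ 2 ^ s :=
    calc b ^ (-s) ≤ (1 / 2) ^ (-s) := rpow_le_rpow_of_nonpos (by norm_num) hb (by linarith)
      _ = 2 ^ s := by rw [one_div, inv_rpow zero_le_two, rpow_neg zero_le_two, inv_inv]
  have hb_ge : 1 ≤ b ^ (-s) :=
    one_le_rpow_of_pos_of_le_one_of_nonpos (by linarith) hb1 (by linarith)
  nlinarith [rpow_nonneg ha (-s)]

/-- Splitting `[0, 1]` at `1 / 2`, one of the two factors is at most `2 ^ s`; the other is
bounded by the sum of both minus one, since each is at least `1`. -/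
lemma mul_one_sub_rpow_neg_le {s t : ℝ} (hs : 0 ≤ s) (ht0 : 0 ≤ t) (ht1 : t ≤ 1) :
    (t * (1 - t)) ^ (-s) ≤ 2 ^ s * (t ^ (-s) + (1 - t) ^ (-s) - 1) := by
  rw [mul_rpow ht0 (by linarith)]
  rcases le_total t (1 / 2) with h | h
  · exact rpow_neg_mul_rpow_neg_le_of_half_le hs ht0 (by linarith) (by linarith)
  · rw [mul_comm, add_comm (t ^ _)]
    exact rpow_neg_mul_rpow_neg_le_of_half_le hs (by linarith) h ht1

lemma intervalIntegrable_one_sub_rpow {r : ℝ} (hr : -1 < r) :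
    IntervalIntegrable (fun t : ℝ => (1 - t) ^ r) volume 0 1 := by
  simpa using
    ((intervalIntegral.intervalIntegrable_rpow' (a := 0) (b := 1) hr).comp_sub_left 1).symm

lemma integral_one_sub_rpow {r : ℝ} (hr : -1 < r) :
    ∫ t in (0 : ℝ)..1, (1 - t) ^ r = 1 / (r + 1) := by
  rw [intervalIntegral.integral_comp_sub_left (fun t => t ^ r), sub_self, sub_zero,
    integral_rpow (Or.inl hr)]
  simp [zero_rpow (by linarith : r + 1 ≠ 0)]

lemma integral_rpow_zero_one {r : ℝ} (hr : -1 < r) :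
    ∫ t in (0 : ℝ)..1, t ^ r = 1 / (r + 1) := by
  rw [integral_rpow (Or.inl hr)]
  simp [zero_rpow (by linarith : r + 1 ≠ 0)]

lemma intervalIntegrable_mul_one_sub_rpow_neg_majorant {s : ℝ} (hs : s < 1) :
    IntervalIntegrable (fun t : ℝ => 2 ^ s * (t ^ (-s) + (1 - t) ^ (-s) - 1)) volume 0 1 :=
  (((intervalIntegral.intervalIntegrable_rpow' (by linarith)).add
    (intervalIntegrable_one_sub_rpow (by linarith))).sub intervalIntegrable_const).const_mul _

lemma intervalIntegrable_mul_one_sub_rpow_neg {s : ℝ} (hs0 : 0 ≤ s) (hs1 : s < 1) :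
    IntervalIntegrable (fun t : ℝ => (t * (1 - t)) ^ (-s)) volume 0 1 := by
  refine (intervalIntegrable_mul_one_sub_rpow_neg_majorant hs1).mono_fun'
    (Measurable.aestronglyMeasurable (by fun_prop)) ?_
  rw [uIoc_of_le zero_le_one]
  filter_upwards [ae_restrict_mem measurableSet_Ioc] with t ⟨ht0, ht1⟩
  rw [norm_of_nonneg (rpow_nonneg (mul_nonneg ht0.le (by linarith)) _)]
  exact mul_one_sub_rpow_neg_le hs0 ht0.le ht1

lemma integral_mul_one_sub_rpow_neg_le {s : ℝ} (hs0 : 0 ≤ s) (hs1 : s < 1) :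
    ∫ t in (0 : ℝ)..1, (t * (1 - t)) ^ (-s) ≤ 2 ^ s * (1 + s) / (1 - s) := by
  calc ∫ t in (0 : ℝ)..1, (t * (1 - t)) ^ (-s)
      ≤ ∫ t in (0 : ℝ)..1, 2 ^ s * (t ^ (-s) + (1 - t) ^ (-s) - 1) :=
        intervalIntegral.integral_mono_on zero_le_one
          (intervalIntegrable_mul_one_sub_rpow_neg hs0 hs1)
          (intervalIntegrable_mul_one_sub_rpow_neg_majorant hs1)
          fun t ht => mul_one_sub_rpow_neg_le hs0 ht.1 ht.2
    _ = 2 ^ s * (1 + s) / (1 - s) := by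
        have hf := intervalIntegral.intervalIntegrable_rpow' (a := 0) (b := 1) (r := -s)
          (by linarith)
        have hg := intervalIntegrable_one_sub_rpow (r := -s) (by linarith)
        have : -s + 1 ≠ 0 := by linarith
        have : 1 - s ≠ 0 := by linarith
        rw [intervalIntegral.integral_const_mul,
          intervalIntegral.integral_sub (hf.add hg) intervalIntegrable_const,
          intervalIntegral.integral_add hf hg, integral_rpow_zero_one (by linarith),
          integral_one_sub_rpow (by linarith), intervalIntegral.integral_const]
        field_simp
        ring

lemma integral_mul_one_sub_rpow_neg_le_exp {s : ℝ} (hs0 : 0 ≤ s) (hs1 : s ≤ 1 / 2) :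
    ∫ t in (0 : ℝ)..1, (t * (1 - t)) ^ (-s) ≤ (2 * exp 4) ^ s := by
  have h1s : 0 < 1 - s := by linarith
  calc ∫ t in (0 : ℝ)..1, (t * (1 - t)) ^ (-s) ≤ 2 ^ s * (1 + s) / (1 - s) :=
        integral_mul_one_sub_rpow_neg_le hs0 (by linarith)
    _ ≤ 2 ^ s * (1 + 4 * s) := by
        rw [mul_div_assoc]
        gcongr
        rw [div_le_iff₀ h1s]
        nlinarith
    _ ≤ 2 ^ s * exp (4 * s) := by
        gcongr
        linarith [add_one_le_exp (4 * s)]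
    _ = (2 * exp 4) ^ s := by
        rw [mul_rpow zero_le_two (exp_pos 4).le, ← exp_mul, mul_comm 4 s]

lemma setIntegral_univ_pi_prod_eq_pow {ι E : Type*} [Fintype ι] [MeasureSpace E]
    [SigmaFinite (volume : Measure E)] (S : Set E) (f : E → ℝ) :
    ∫ x in univ.pi (fun _ : ι => S), ∏ a, f (x a) = (∫ t in S, f t) ^ Fintype.card ι := by
  rw [volume_pi, Measure.restrict_pi_pi, integral_fintype_prod_eq_pow]

lemma MeasureTheory.IntegrableOn.univ_pi_prod {ι E : Type*} [Fintype ι] [MeasureSpace E]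
    [SigmaFinite (volume : Measure E)] {S : Set E} {f : E → ℝ} (hf : IntegrableOn f S) :
    IntegrableOn (fun x : ι → E => ∏ a, f (x a)) (univ.pi fun _ => S) := by
  rw [IntegrableOn, volume_pi, Measure.restrict_pi_pi]
  exact Integrable.fintype_prod fun _ => hf

lemma card_mul_prod_rpow_inv_le_sum {ι : Type*} [Fintype ι] [Nonempty ι] {y : ι → ℝ}
    (hy : ∀ a, 0 ≤ y a) :
    Fintype.card ι * (∏ a, y a) ^ (Fintype.card ι : ℝ)⁻¹ ≤ ∑ a, y a := by
  have hn : (0 : ℝ) < Fintype.card ι := by exact_mod_cast Fintype.card_pos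
  have := geom_mean_le_arith_mean Finset.univ (fun _ => 1) y (fun _ _ => zero_le_one)
    (by simpa using hn) (fun a _ => hy a)
  simp only [rpow_one, one_mul, Finset.sum_const, Finset.card_univ, nsmul_eq_mul, mul_one] at this
  rwa [le_div_iff₀ hn, mul_comm] at this

lemma sum_rpow_neg_le_prod {ι : Type*} [Fintype ι] [Nonempty ι] {y : ι → ℝ} (hy : ∀ a, 0 < y a)
    {p : ℝ} (hp : 0 ≤ p) :
    (∑ a, y a) ^ (-p) ≤ (Fintype.card ι : ℝ) ^ (-p) * ∏ a, y a ^ (-(p / Fintype.card ι)) := by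
  have hn : (0 : ℝ) < Fintype.card ι := by exact_mod_cast Fintype.card_pos
  set n : ℝ := (Fintype.card ι : ℝ)
  have hprod : 0 < ∏ a, y a := Finset.prod_pos fun a _ => hy a
  calc (∑ a, y a) ^ (-p) ≤ (n * (∏ a, y a) ^ n⁻¹) ^ (-p) :=
        rpow_le_rpow_of_nonpos (by positivity) (card_mul_prod_rpow_inv_le_sum fun a => (hy a).le)
          (by linarith)
    _ = n ^ (-p) * ∏ a, y a ^ (-(p / n)) := by
        rw [mul_rpow hn.le (by positivity), ← rpow_mul hprod.le,
          ← finsetProd_rpow _ _ fun a _ => (hy a).le]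
        ring_nf

theorem setIntegral_unitCube_sum_mul_one_sub_rpow_neg_le {ι : Type*} [Fintype ι] [Nonempty ι]
    {p : ℝ} (hp : 0 ≤ p) (hpn : 2 * p ≤ Fintype.card ι) :
    ∫ x in univ.pi (fun _ : ι => Icc (0 : ℝ) 1), (∑ a, x a * (1 - x a)) ^ (-p)
      ≤ (2 * exp 4 / Fintype.card ι) ^ p := by
  have hn : (0 : ℝ) < Fintype.card ι := by exact_mod_cast Fintype.card_pos
  set s := p / Fintype.card ι
  have hs0 : 0 ≤ s := by positivity
  have hs1 : s ≤ 1 / 2 := by rw [div_le_iff₀ hn]; linarith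
  set h : ℝ → ℝ := fun t => (t * (1 - t)) ^ (-s)
  have hI : ∫ t in Ioo (0 : ℝ) 1, h t ≤ (2 * exp 4) ^ s := by
    rw [← integral_Ioc_eq_integral_Ioo, ← intervalIntegral.integral_of_le zero_le_one]
    exact integral_mul_one_sub_rpow_neg_le_exp hs0 hs1
  have hI0 : 0 ≤ ∫ t in Ioo (0 : ℝ) 1, h t := setIntegral_nonneg measurableSet_Ioo
    fun t ht => rpow_nonneg (mul_nonneg ht.1.le (by linarith [ht.2])) _
  have hh : IntegrableOn h (Ioo 0 1) :=
    ((intervalIntegrable_iff_integrableOn_Ioc_of_le zero_le_one).1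
      (intervalIntegrable_mul_one_sub_rpow_neg hs0 (by linarith))).mono_set Ioo_subset_Ioc_self
  have hpos : ∀ᵐ x ∂volume.restrict (univ.pi fun _ : ι => Ioo (0 : ℝ) 1),
      ∀ a, 0 < x a * (1 - x a) := by
    filter_upwards [ae_restrict_mem (MeasurableSet.univ_pi fun _ => measurableSet_Ioo)]
      with x hx a
    exact mul_pos (hx a trivial).1 (by linarith [(hx a trivial).2])
  have hcube : (univ.pi fun _ : ι => Ioo (0 : ℝ) 1) =ᵐ[volume] univ.pi fun _ => Icc 0 1 :=
    Measure.pi_Ioo_ae_eq_pi_Icc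
  rw [← setIntegral_congr_set hcube]
  calc ∫ x in univ.pi (fun _ : ι => Ioo (0 : ℝ) 1), (∑ a, x a * (1 - x a)) ^ (-p)
      ≤ ∫ x in univ.pi (fun _ : ι => Ioo (0 : ℝ) 1),
          (Fintype.card ι : ℝ) ^ (-p) * ∏ a, h (x a) := by
        refine integral_mono_of_nonneg ?_ (hh.univ_pi_prod.const_mul _) ?_
        · filter_upwards [hpos] with x hx
          exact rpow_nonneg (Finset.sum_nonneg fun a _ => (hx a).le) _
        · filter_upwards [hpos] with x hx
          exact sum_rpow_neg_le_prod hx hp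
    _ = (Fintype.card ι : ℝ) ^ (-p) * (∫ t in Ioo (0 : ℝ) 1, h t) ^ Fintype.card ι := by
        rw [integral_const_mul, setIntegral_univ_pi_prod_eq_pow]
    _ ≤ (Fintype.card ι : ℝ) ^ (-p) * ((2 * exp 4) ^ s) ^ Fintype.card ι := by gcongr
    _ = (2 * exp 4 / Fintype.card ι) ^ p := by
        rw [← rpow_natCast, ← rpow_mul (by positivity), div_mul_cancel₀ p hn.ne',
          div_rpow (by positivity) hn.le, rpow_neg hn.le, div_eq_mul_inv, mul_comm]

theorem negative_moment_sigma_bound :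
    ∃ C > (0 : ℝ), ∃ c > (0 : ℝ), ∀ k : ℕ, 1 ≤ k → ∀ ν : ℕ, 1 ≤ ν → (ν : ℝ) ≤ Real.sqrt k →
      ∫ x in Set.univ.pi (fun _ : Fin (2 * k - 1) => Set.Icc (0 : ℝ) 1),
          (∑ a, x a * (1 - x a)) ^ (-(ν : ℝ) / 2)
        ≤ C * (c / k) ^ ((ν : ℝ) / 2) := by
  refine ⟨1, one_pos, 2 * exp 4, by positivity, fun k hk ν _ hνk => ?_⟩
  have : Nonempty (Fin (2 * k - 1)) := ⟨⟨0, by omega⟩⟩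
  have hνk : ν ≤ k := by
    have hsq : ν ^ 2 ≤ k := by exact_mod_cast (le_sqrt ν.cast_nonneg k.cast_nonneg).1 hνk
    exact (Nat.le_self_pow two_ne_zero ν).trans hsq
  rw [neg_div, one_mul]
  calc _ ≤ (2 * exp 4 / Fintype.card (Fin (2 * k - 1))) ^ ((ν : ℝ) / 2) :=
        setIntegral_unitCube_sum_mul_one_sub_rpow_neg_le (by positivity) (by
          rw [Fintype.card_fin, mul_div_cancel₀ _ two_ne_zero]
          exact_mod_cast hνk.trans (by omega))
    _ ≤ (2 * exp 4 / k) ^ ((ν : ℝ) / 2) := by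
        rw [Fintype.card_fin]
        gcongr
        exact_mod_cast (by omega : k ≤ 2 * k - 1)
end

section
/- Fix an integer k ≥ 1 and m = 2k-1 voters. For x ∈ [0,1]^m, let N(x) be the number of indices a ∈ [m] with x_a < X_a, where X_1,…,X_m are independent uniform [0,1] random variables. Then the probability Q_{m,n} that there exists a Condorcet winner among n candidates under the impartial culture model equals n ∫_{[0,1]^m} P(N(x) ≥ k)^{n-1} dx. -/
/-!
Encode the `m` ballots as an `m × n` matrix of independent samples of an atomless law `μ` (here
uniform on `[0,1]`), voter `a` ranking the candidates by increasing entries of row `a`. Almost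
surely each row has distinct entries; its `n!` orderings are equally likely by exchangeability, and
the rows are independent, so the induced rank profile is uniform and the proportion of profiles
having a Condorcet winner is the probability that the matrix has one.

Read by columns, the matrix is an i.i.d. family of `n` vectors in `[0,1]^m`, and a Condorcet
winner is a column beating every other one by strict majority. Beating is asymmetric, so the events
"column `j` wins" are disjoint, and by exchangeability they are equiprobable. Conditionally on
column `0` being `x`, the other `n - 1` columns are independent and each is beaten by `x` with
probability `P(N(x) ≥ k)`, which gives the integral.
-/

open MeasureTheory Set Function
open scoped ENNReal Nat

section PiMeasure

variable {ι α : Type*} [Fintype ι] [MeasurableSpace α] (μ : Measure α) [SigmaFinite μ]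

theorem measure_pi_preimage_comp_equiv (e : ι ≃ ι) (s : Set (ι → α)) :
    Measure.pi (fun _ => μ) ((fun v => v ∘ e) ⁻¹' s) = Measure.pi (fun _ => μ) s :=
  (measurePreserving_arrowCongr' (fun _ => μ) (fun _ => μ) e.symm (MeasurableEquiv.refl α)
    fun _ => MeasurePreserving.id μ).measure_preimage_equiv s

theorem measurePreserving_transpose {κ : Type*} [Fintype κ] :
    MeasurePreserving (fun (W : ι → κ → α) (a : κ) (j : ι) => W j a)
      (Measure.pi fun _ : ι => Measure.pi fun _ : κ => μ)
      (Measure.pi fun _ : κ => Measure.pi fun _ : ι => μ) where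
  measurable := by fun_prop
  map_eq := by
    refine (Measure.pi_eq_generateFrom (fun _ => generateFrom_pi) (fun _ => isPiSystem_pi)
      (fun _ => Measure.FiniteSpanningSetsIn.pi fun _ => μ.toFiniteSpanningSetsIn)
      fun s hs => ?_).symm
    choose t ht hts using hs
    obtain rfl : s = fun a => univ.pi (t a) := funext fun a => (hts a).symm
    have hpre : (fun (W : ι → κ → α) (a : κ) (j : ι) => W j a) ⁻¹' univ.pi (fun a => univ.pi (t a))
        = univ.pi fun j => univ.pi fun a => t a j := by
      ext W
      simp only [mem_preimage, mem_pi, mem_univ, true_implies]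
      exact forall_comm
    rw [Measure.map_apply (by fun_prop)
      (MeasurableSet.univ_pi fun a => MeasurableSet.univ_pi fun j => ht a j (mem_univ j)), hpre]
    simp_rw [Measure.pi_pi]
    exact Finset.prod_comm

theorem ae_apply_ne_apply [MeasurableEq α] [NullSingletonClass μ] {n : ℕ} {i j : Fin n}
    (hij : i ≠ j) :
    ∀ᵐ v ∂Measure.pi (fun _ : Fin n => μ), v i ≠ v j := by
  cases n with
  | zero => exact i.elim0
  | succ n =>
    obtain ⟨t, rfl⟩ := Fin.exists_succAbove_eq hij.symm
    have hprod : ∀ᵐ p ∂μ.prod (Measure.pi fun _ : Fin n => μ), p.1 ≠ p.2 t := by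
      have hm : MeasurableSet {p : α × (Fin n → α) | p.1 ≠ p.2 t} :=
        (measurableSet_eq_fun (g := fun p : α × (Fin n → α) => p.2 t) measurable_fst
          (by fun_prop)).compl
      rw [Measure.ae_prod_iff_ae_ae hm]
      exact .of_forall fun x =>
        (Measure.tendsto_eval_ae_ae.eventually (Measure.ae_ne μ x)).mono fun _ h => Ne.symm h
    exact (measurePreserving_piFinSuccAbove (fun _ => μ) i).quasiMeasurePreserving.ae hprod

end PiMeasure

section Tournament

variable {β : Type*} [MeasurableSpace β] (ν : Measure β) [SigmaFinite ν] {R : β → β → Prop}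

theorem measurableSet_forall_ne_rel (hR : MeasurableSet {p : β × β | R p.1 p.2}) {n : ℕ}
    (j : Fin n) : MeasurableSet {W : Fin n → β | ∀ j' ≠ j, R (W j) (W j')} := by
  refine measurableSet_setOfPred.2 (Measurable.forall fun j' => measurable_const.imp ?_)
  exact (measurableSet_setOfPred.1 hR).comp (f := fun W : Fin n → β => (W j, W j')) (by fun_prop)

theorem measure_pi_forall_ne_rel_eq {n : ℕ} (i j : Fin n) :
    Measure.pi (fun _ : Fin n => ν) {W | ∀ j' ≠ i, R (W i) (W j')}
      = Measure.pi (fun _ : Fin n => ν) {W | ∀ j' ≠ j, R (W j) (W j')} := by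
  rw [← measure_pi_preimage_comp_equiv ν (Equiv.swap i j)]
  congr 1
  ext W
  simp only [mem_preimage, mem_ofPred_eq, comp_apply, Equiv.swap_apply_left]
  refine ⟨fun h j' hj' => ?_, fun h j' hj' => ?_⟩
  · simpa using h (Equiv.swap i j j') (by simpa [Equiv.swap_apply_eq_iff] using hj')
  · exact h (Equiv.swap i j j') (by simpa [Equiv.swap_apply_eq_iff] using hj')

theorem measure_pi_forall_ne_zero_rel (hR : MeasurableSet {p : β × β | R p.1 p.2}) (n : ℕ) :
    Measure.pi (fun _ : Fin (n + 1) => ν) {W | ∀ j ≠ 0, R (W 0) (W j)}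
      = ∫⁻ x, ν {y | R x y} ^ n ∂ν := by
  let S : Set (β × (Fin n → β)) := {p | ∀ t, R p.1 (p.2 t)}
  have hS : MeasurableSet S := by
    refine measurableSet_setOfPred.2 (Measurable.forall fun t => ?_)
    exact (measurableSet_setOfPred.1 hR).comp (f := fun p : β × (Fin n → β) => (p.1, p.2 t))
      (by fun_prop)
  have hpre : MeasurableEquiv.piFinSuccAbove (fun _ => β) 0 ⁻¹' S
      = {W | ∀ j ≠ 0, R (W 0) (W j)} := by
    ext W
    simp only [mem_preimage, mem_ofPred_eq, S, MeasurableEquiv.piFinSuccAbove_apply,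
      Fin.insertNthEquiv_symm_apply, Fin.removeNth, Fin.succAbove_zero]
    exact ⟨fun h j hj => Fin.succ_pred j hj ▸ h _, fun h t => h t.succ t.succ_ne_zero⟩
  have hslice : ∀ x, Prod.mk x ⁻¹' S = univ.pi fun _ : Fin n => {y | R x y} := fun x => by
    ext; simp [S]
  rw [← hpre, (measurePreserving_piFinSuccAbove (fun _ => ν) 0).measure_preimage_equiv,
    Measure.prod_apply hS]
  simp_rw [hslice, Measure.pi_pi, Finset.prod_const, Finset.card_univ, Fintype.card_fin]

theorem measure_pi_exists_forall_ne_rel (hR : MeasurableSet {p : β × β | R p.1 p.2})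
    (hR_asymm : ∀ x y, R x y → ¬R y x) (n : ℕ) :
    Measure.pi (fun _ : Fin n => ν) {W | ∃ j, ∀ j' ≠ j, R (W j) (W j')}
      = n * ∫⁻ x, ν {y | R x y} ^ (n - 1) ∂ν := by
  cases n with
  | zero => simp
  | succ n =>
    have hdisj : Pairwise
        (Disjoint on fun j : Fin (n + 1) => {W : Fin (n + 1) → β | ∀ j' ≠ j, R (W j) (W j')}) :=
      fun j j' hne => disjoint_left.2 fun _ hj hj' => hR_asymm _ _ (hj j' hne.symm) (hj' j hne)
    rw [ofPred_exists, measure_iUnion hdisj (measurableSet_forall_ne_rel hR), tsum_fintype,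
      Finset.sum_congr rfl fun j _ => measure_pi_forall_ne_rel_eq ν j 0, Finset.sum_const,
      Finset.card_univ, Fintype.card_fin, nsmul_eq_mul, measure_pi_forall_ne_zero_rel ν hR,
      Nat.add_sub_cancel]

end Tournament

section OrderPattern

variable {α : Type*} [LinearOrder α] {n : ℕ}

def orderedAs (τ : Equiv.Perm (Fin n)) : Set (Fin n → α) :=
  {v | ∀ i j, τ i < τ j ↔ v i < v j}

theorem eq_of_mem_orderedAs {τ τ' : Equiv.Perm (Fin n)} {v : Fin n → α}
    (h : v ∈ orderedAs τ) (h' : v ∈ orderedAs τ') : τ = τ' := by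
  have hmono : Monotone (τ' * τ⁻¹) := StrictMono.monotone fun x y hxy => by
    obtain ⟨i, rfl⟩ := τ.surjective x
    obtain ⟨j, rfl⟩ := τ.surjective y
    simpa using (h' i j).2 ((h i j).1 hxy)
  rw [Equiv.Perm.monotone_iff, mul_inv_eq_one] at hmono
  exact hmono.symm

theorem pairwise_disjoint_orderedAs : Pairwise (Disjoint on (orderedAs (α := α) (n := n))) :=
  fun _ _ hne => disjoint_left.2 fun _ h h' => hne (eq_of_mem_orderedAs h h')

theorem exists_mem_orderedAs_of_injective {v : Fin n → α} (hv : Injective v) :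
    ∃ τ, v ∈ orderedAs τ := by
  have hsort : StrictMono (v ∘ Tuple.sort v) :=
    (Tuple.monotone_sort v).strictMono_of_injective (hv.comp (Equiv.injective _))
  refine ⟨(Tuple.sort v)⁻¹, fun i j => ?_⟩
  rw [← hsort.lt_iff_lt]
  simp [Equiv.Perm.coe_inv]

theorem orderedAs_preimage_comp_symm (τ : Equiv.Perm (Fin n)) :
    (fun v : Fin n → α => v ∘ τ.symm) ⁻¹' orderedAs 1 = orderedAs τ := by
  ext v
  refine ⟨fun h i j => by simpa using h (τ i) (τ j), fun h i j => ?_⟩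
  simpa using h (τ.symm i) (τ.symm j)

variable [TopologicalSpace α] [OrderClosedTopology α] [SecondCountableTopology α]
  [MeasurableSpace α] [OpensMeasurableSpace α]

theorem measurableSet_orderedAs (τ : Equiv.Perm (Fin n)) :
    MeasurableSet (orderedAs (α := α) τ) := by
  refine measurableSet_setOfPred.2 (Measurable.forall fun i => Measurable.forall fun j => ?_)
  exact measurable_const.iff
    (measurableSet_setOfPred.1 (measurableSet_lt (by fun_prop) (by fun_prop)))

variable (μ : Measure α) [NullSingletonClass μ]

theorem ae_exists_mem_orderedAs [SigmaFinite μ] :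
    ∀ᵐ v ∂Measure.pi (fun _ : Fin n => μ), ∃ τ, v ∈ orderedAs τ := by
  have hinj : ∀ᵐ v ∂Measure.pi (fun _ : Fin n => μ), Injective v := by
    simp_rw [injective_iff_pairwise_ne, Pairwise, ae_all_iff]
    exact fun i j hij => ae_apply_ne_apply μ hij
  exact hinj.mono fun _ => exists_mem_orderedAs_of_injective

theorem measure_pi_orderedAs [IsProbabilityMeasure μ] (τ : Equiv.Perm (Fin n)) :
    Measure.pi (fun _ : Fin n => μ) (orderedAs τ) = (n ! : ℝ≥0∞)⁻¹ := by
  have hsymm : ∀ τ : Equiv.Perm (Fin n), Measure.pi (fun _ => μ) (orderedAs τ)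
      = Measure.pi (fun _ => μ) (orderedAs 1) := fun τ => by
    rw [← orderedAs_preimage_comp_symm, measure_pi_preimage_comp_equiv]
  have hunion : Measure.pi (fun _ : Fin n => μ) (⋃ τ, orderedAs τ) = 1 := by
    have hae : ∀ᵐ v ∂Measure.pi (fun _ : Fin n => μ), v ∈ ⋃ τ, orderedAs τ := by
      simpa only [mem_iUnion] using ae_exists_mem_orderedAs μ
    exact (prob_compl_eq_zero_iff (MeasurableSet.iUnion measurableSet_orderedAs)).1
      (mem_ae_iff.1 hae)
  rw [measure_iUnion pairwise_disjoint_orderedAs measurableSet_orderedAs, tsum_fintype,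
    Finset.sum_congr rfl fun τ _ => hsymm τ, Finset.sum_const, Finset.card_univ,
    Fintype.card_perm, Fintype.card_fin, nsmul_eq_mul] at hunion
  rw [hsymm]
  exact ENNReal.eq_inv_of_mul_eq_one_left (by rwa [mul_comm])

end OrderPattern

section RankProfile

variable {α V : Type*} [LinearOrder α] {n : ℕ}

def orderedAsProfile (σ : V → Equiv.Perm (Fin n)) : Set (V → Fin n → α) :=
  univ.pi fun a => orderedAs (σ a)

theorem pairwise_disjoint_orderedAsProfile :
    Pairwise (Disjoint on (orderedAsProfile (α := α) (V := V) (n := n))) := by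
  intro σ σ' hne
  obtain ⟨a, ha⟩ := Function.ne_iff.1 hne
  exact disjoint_left.2 fun _ h h' =>
    ha (eq_of_mem_orderedAs (h a (mem_univ a)) (h' a (mem_univ a)))

variable [TopologicalSpace α] [OrderClosedTopology α] [SecondCountableTopology α]
  [MeasurableSpace α] [OpensMeasurableSpace α] [Fintype V]

theorem measurableSet_orderedAsProfile (σ : V → Equiv.Perm (Fin n)) :
    MeasurableSet (orderedAsProfile (α := α) σ) :=
  MeasurableSet.univ_pi fun a => measurableSet_orderedAs (σ a)

variable (μ : Measure α) [NullSingletonClass μ]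

theorem measure_pi_orderedAsProfile [IsProbabilityMeasure μ] (σ : V → Equiv.Perm (Fin n)) :
    Measure.pi (fun _ : V => Measure.pi fun _ : Fin n => μ) (orderedAsProfile σ)
      = (n ! : ℝ≥0∞)⁻¹ ^ Fintype.card V := by
  rw [orderedAsProfile, Measure.pi_pi]
  simp_rw [measure_pi_orderedAs, Finset.prod_const, Finset.card_univ]

theorem ae_exists_mem_orderedAsProfile [SigmaFinite μ] :
    ∀ᵐ U ∂Measure.pi (fun _ : V => Measure.pi fun _ : Fin n => μ),
      ∃ σ, U ∈ orderedAsProfile (n := n) σ := by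
  have h : ∀ᵐ U ∂Measure.pi (fun _ : V => Measure.pi fun _ : Fin n => μ),
      ∀ a, ∃ τ, U a ∈ orderedAs τ :=
    ae_all_iff.2 fun _ => (Measure.tendsto_eval_ae_ae
      (μ := fun _ : V => Measure.pi fun _ : Fin n => μ)).eventually (ae_exists_mem_orderedAs μ)
  filter_upwards [h] with U hU
  choose σ hσ using hU
  exact ⟨σ, fun a _ => hσ a⟩

end RankProfile

section Condorcet

def MajorityPrefers {V β : Type*} [LT β] (x y : V → β) : Prop :=
  Nat.card V < 2 * Nat.card {a // x a < y a}

/-- `r j a` is the score given by voter `a` to candidate `j`; lower scores are preferred. -/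
def HasCondorcetWinner {C V β : Type*} [LT β] (r : C → V → β) : Prop :=
  ∃ j, ∀ j' ≠ j, MajorityPrefers (r j) (r j')

variable {V : Type*}

theorem hasCondorcetWinner_congr {C β γ : Type*} [LT β] [LT γ] {r : C → V → β} {s : C → V → γ}
    (h : ∀ j j' a, r j a < r j' a ↔ s j a < s j' a) :
    HasCondorcetWinner r ↔ HasCondorcetWinner s := by
  unfold HasCondorcetWinner MajorityPrefers
  simp_rw [h]

variable [Fintype V]

theorem majorityPrefers_asymm {β : Type*} [Preorder β] {x y : V → β}
    (hxy : MajorityPrefers x y) : ¬MajorityPrefers y x := by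
  classical
  have hsum : Nat.card {a // x a < y a} + Nat.card {a // y a < x a} ≤ Nat.card V := by
    simp only [Nat.card_eq_fintype_card, Fintype.card_subtype]
    rw [← Finset.card_union_of_disjoint
      (Finset.disjoint_filter.2 fun a _ h h' => lt_asymm h h')]
    exact Finset.card_le_univ _
  unfold MajorityPrefers at *
  omega

theorem measurable_card_subtype {δ : Type*} [MeasurableSpace δ] {p : V → δ → Prop}
    (hp : ∀ a, MeasurableSet {x | p a x}) : Measurable fun x => Nat.card {a // p a x} := by
  classical
  simp_rw [Nat.card_eq_fintype_card, Fintype.card_subtype, Finset.card_filter]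
  exact Finset.measurable_sum _ fun a _ => Measurable.ite (hp a) measurable_const measurable_const

variable {α : Type*} [LinearOrder α] [TopologicalSpace α] [OrderClosedTopology α]
  [SecondCountableTopology α] [MeasurableSpace α] [OpensMeasurableSpace α] {n : ℕ}

theorem measurableSet_majorityPrefers :
    MeasurableSet {p : (V → α) × (V → α) | MajorityPrefers p.1 p.2} :=
  measurable_card_subtype (p := fun a (p : (V → α) × (V → α)) => p.1 a < p.2 a)
    (fun _ => measurableSet_lt (by fun_prop) (by fun_prop))
    (MeasurableSet.of_discrete (s := {c | Nat.card V < 2 * c}))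

theorem measurableSet_hasCondorcetWinner :
    MeasurableSet {W : Fin n → V → α | HasCondorcetWinner W} := by
  simp only [HasCondorcetWinner, ofPred_exists]
  exact MeasurableSet.iUnion (measurableSet_forall_ne_rel measurableSet_majorityPrefers)

variable (μ : Measure α)

theorem measure_pi_hasCondorcetWinner_eq_lintegral [SigmaFinite μ] :
    Measure.pi (fun _ : Fin n => Measure.pi fun _ : V => μ) {W | HasCondorcetWinner W}
      = n * ∫⁻ x, Measure.pi (fun _ : V => μ) {y | MajorityPrefers x y} ^ (n - 1)
          ∂Measure.pi fun _ : V => μ :=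
  measure_pi_exists_forall_ne_rel _ measurableSet_majorityPrefers
    (fun _ _ => majorityPrefers_asymm) n

variable [NullSingletonClass μ] [IsProbabilityMeasure μ]

theorem measure_pi_hasCondorcetWinner_eq_card :
    Measure.pi (fun _ : Fin n => Measure.pi fun _ : V => μ) {W | HasCondorcetWinner W}
      = Nat.card {σ : V → Equiv.Perm (Fin n) // HasCondorcetWinner fun j a => σ a j}
        * (n ! : ℝ≥0∞)⁻¹ ^ Fintype.card V := by
  classical
  let good := Finset.univ.filter fun σ : V → Equiv.Perm (Fin n) =>
    HasCondorcetWinner fun j a => σ a j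
  -- Almost every ballot matrix has a rank profile, which alone decides whether there is a winner.
  have hae : {U : V → Fin n → α | HasCondorcetWinner fun j a => U a j}
      =ᵐ[Measure.pi fun _ => Measure.pi fun _ => μ] ⋃ σ ∈ good, orderedAsProfile σ := by
    refine Filter.eventuallyEq_set.2 ((ae_exists_mem_orderedAsProfile μ).mono fun U hU => ?_)
    obtain ⟨σ, hσ⟩ := hU
    simp only [mem_ofPred_eq, mem_iUnion, good, Finset.mem_filter, Finset.mem_univ, true_and,
      exists_prop]
    rw [hasCondorcetWinner_congr (s := fun j a => σ a j)
      fun j j' a => (hσ a (mem_univ a) j j').symm]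
    exact ⟨fun h => ⟨σ, h, hσ⟩, fun ⟨σ', h, hσ'⟩ =>
      (pairwise_disjoint_orderedAsProfile.eq (not_disjoint_iff.2 ⟨U, hσ', hσ⟩)) ▸ h⟩
  have hmeas : MeasurableSet {U : V → Fin n → α | HasCondorcetWinner fun j a => U a j} :=
    measurableSet_hasCondorcetWinner.preimage (by fun_prop)
  refine ((measurePreserving_transpose μ).measure_preimage hmeas.nullMeasurableSet).trans ?_
  rw [measure_congr hae, measure_biUnion_finset
    (pairwise_disjoint_orderedAsProfile.set_pairwise _) fun σ _ => measurableSet_orderedAsProfile σ]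
  simp_rw [measure_pi_orderedAsProfile, Finset.sum_const, nsmul_eq_mul, Nat.card_eq_fintype_card,
    Fintype.card_subtype, good]

theorem card_hasCondorcetWinner_div_card_eq_integral :
    (Nat.card {σ : V → Equiv.Perm (Fin n) // HasCondorcetWinner fun j a => σ a j} : ℝ)
        / Nat.card (V → Equiv.Perm (Fin n))
      = n * ∫ x, (Measure.pi (fun _ : V => μ) {y | MajorityPrefers x y}).toReal ^ (n - 1)
          ∂Measure.pi fun _ : V => μ := by
  classical
  have hmeas : Measurable fun x : V → α =>
      Measure.pi (fun _ : V => μ) {y | MajorityPrefers x y} ^ (n - 1) :=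
    (measurable_measure_prodMk_left measurableSet_majorityPrefers).pow_const _
  have hcard : Nat.card (V → Equiv.Perm (Fin n)) = n ! ^ Fintype.card V := by
    rw [Nat.card_eq_fintype_card, Fintype.card_fun, Fintype.card_perm, Fintype.card_fin]
  simp_rw [← ENNReal.toReal_pow]
  rw [integral_toReal hmeas.aemeasurable (.of_forall fun _ => by finiteness),
    ← ENNReal.toReal_natCast n, ← ENNReal.toReal_mul,
    ← measure_pi_hasCondorcetWinner_eq_lintegral, measure_pi_hasCondorcetWinner_eq_card, hcard]
  simp [div_eq_mul_inv]

end Condorcet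

/-- Impartial culture: each of the `m = 2k-1` voters independently picks a uniformly random
ranking (a permutation of `Fin n`, candidate `j` having rank `σ a j`); candidate `j` is a
Condorcet winner if for every other candidate `j'`, strictly more than `m/2` voters rank `j`
before `j'`.  The probability `Q_{m,n}` that a Condorcet winner exists equals
`n ∫_{[0,1]^m} P(N(x) ≥ k)^{n-1} dx`, where `N(x)` is the number of coordinates `a` with
`x_a < X_a` for `X` uniform on `[0,1]^m`. -/
theorem condorcet_probability_integral_formula (k n : ℕ) (hk : 1 ≤ k) :
    ((Nat.card {σ : Fin (2 * k - 1) → (Fin n ≃ Fin n) //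
        ∃ j : Fin n, ∀ j' : Fin n, j' ≠ j →
          2 * k - 1 < 2 * Nat.card {a : Fin (2 * k - 1) // σ a j < σ a j'}} : ℝ) /
      (Nat.card (Fin (2 * k - 1) → (Fin n ≃ Fin n)) : ℝ))
    = n * ∫ x in Set.univ.pi (fun _ : Fin (2 * k - 1) => Set.Icc (0 : ℝ) 1),
        ((volume {X : Fin (2 * k - 1) → ℝ |
            X ∈ Set.univ.pi (fun _ : Fin (2 * k - 1) => Set.Icc (0 : ℝ) 1) ∧
            k ≤ Nat.card {a : Fin (2 * k - 1) // x a < X a}}).toReal) ^ (n - 1) := by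
  let μ : Measure ℝ := volume.restrict (Icc 0 1)
  have : IsProbabilityMeasure μ := ⟨by simp [μ]⟩
  have hcube : volume.restrict (univ.pi fun _ : Fin (2 * k - 1) => Icc (0 : ℝ) 1)
      = Measure.pi fun _ => μ := by
    rw [volume_pi, Measure.restrict_pi_pi]
  have hwin : ∀ σ : Fin (2 * k - 1) → Equiv.Perm (Fin n),
      (∃ j : Fin n, ∀ j' : Fin n, j' ≠ j →
        2 * k - 1 < 2 * Nat.card {a : Fin (2 * k - 1) // σ a j < σ a j'})
      ↔ HasCondorcetWinner fun j a => σ a j := fun σ => by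
    simp only [HasCondorcetWinner, MajorityPrefers, Nat.card_fin]
  have hbeaten : ∀ x : Fin (2 * k - 1) → ℝ,
      volume {X | X ∈ univ.pi (fun _ : Fin (2 * k - 1) => Icc (0 : ℝ) 1) ∧
        k ≤ Nat.card {a : Fin (2 * k - 1) // x a < X a}}
      = Measure.pi (fun _ => μ) {X | MajorityPrefers x X} := fun x => by
    have hm : MeasurableSet {X | MajorityPrefers x X} :=
      measurable_prodMk_left measurableSet_majorityPrefers
    rw [← hcube, Measure.restrict_apply hm, inter_comm]
    congr 1
    ext X
    simp only [MajorityPrefers, Nat.card_fin, mem_inter_iff, mem_ofPred_eq]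
    exact and_congr_right fun _ => by omega
  rw [Nat.card_congr (Equiv.subtypeEquivRight hwin),
    card_hasCondorcetWinner_div_card_eq_integral μ, hcube]
  simp_rw [hbeaten]
end
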